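/- For each i ∈ {1, …, n₁} and j ∈ {1, …, n₂}, setting θᵢ := 2πι(i + t₁)/n₁, xᵢ := (e^{sθᵢ})_{s=0}^{n₁−1} ∈ ℂ^{n₁}, t̂₂ := t₂ − (m₁/n₁)t₁ + ρ₁t₁, θ_{i,j} := 2πι(j − (m₁/n₁)i + t̂₂)/n₂, and y_{i,j} := (e^{sθ_{i,j}})_{s=0}^{n₂−1} ∈ ℂ^{n₂}, one has K₂ (y_{i,j} ⊗ xᵢ) = δy⁻¹(e^{θ_{i,j}} − 1) · (y_{i,j} ⊗ xᵢ), where ⊗ denotes the Kronecker product. (Theorem 4.2: the complete set of eigenpairs of K₂.) -/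

import Mathlib

/-!
Since `e^{n₁θᵢ} = e^{2πι t₁}`, the geometric vector `xᵢ` is quasi-periodic, so the twisted
cyclic shift `S(m₁)` acts on it as multiplication by `e^{−m₁θᵢ}`, and `J₂ xᵢ = μ xᵢ` with
`μ = e^{2πι ρ₁ t₁} e^{−m₁θᵢ}`. On `y ⊗ xᵢ` the matrix `K₂` therefore acts as the scalar forward
difference on `y` with corner weight `e^{2πι t₂} μ`, and the geometric vector `y_{i,j}` is an
eigenvector of that with eigenvalue `δy⁻¹(e^{θ_{i,j}} − 1)` as soon as
`e^{n₂θ_{i,j}} = e^{2πι t₂} μ`, which is what the choice of `θ_{i,j}` gives modulo `2πι ℤ`.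
-/

open Real Matrix

/-- The `n₁×n₁` block `S(a) = [[0, e^{−2πι t₁} I_a], [I_{n₁−a}, 0]]` with top-right
block of size `a × a` and bottom-left block of size `(n₁−a) × (n₁−a)`. -/
noncomputable def Sblk (n₁ : ℕ) (t₁ : ℝ) (a : ℕ) : Matrix (Fin n₁) (Fin n₁) ℂ :=
  Matrix.of fun s s' =>
    (if (s : ℕ) < a ∧ (s' : ℕ) = (s : ℕ) + (n₁ - a)
      then Complex.exp (-(2 * (π : ℂ) * Complex.I * (t₁ : ℂ))) else 0)
    + (if a ≤ (s : ℕ) ∧ (s' : ℕ) + a = (s : ℕ) then 1 else 0)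

/-- `J₂ = e^{2πι ρ₁ t₁} S(m₁)`. -/
noncomputable def J2 (n₁ : ℕ) (t₁ : ℝ) (ρ₁ m₁ : ℕ) : Matrix (Fin n₁) (Fin n₁) ℂ :=
  Complex.exp (2 * (π : ℂ) * Complex.I * (ρ₁ : ℂ) * (t₁ : ℂ)) • Sblk n₁ t₁ m₁

/-- The Yee discretization `K₂` of `∂y` with quasi-periodic boundary conditions:
`n₂ × n₂` block matrix with `n₁ × n₁` blocks, `(1/δy)` times [`−I` on the block
diagonal, `I` on the block superdiagonal, `e^{2πι t₂} J₂` at block `(n₂−1, 0)`]. -/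
noncomputable def K2 (n₁ n₂ : ℕ) (δy t₁ t₂ : ℝ) (ρ₁ m₁ : ℕ) :
    Matrix (Fin n₂ × Fin n₁) (Fin n₂ × Fin n₁) ℂ :=
  Matrix.of fun p q =>
    (1 / (δy : ℂ)) *
      ((if (q.1 : ℕ) = (p.1 : ℕ) + 1 ∧ q.2 = p.2 then 1 else 0)
        + (if (p.1 : ℕ) = n₂ - 1 ∧ (q.1 : ℕ) = 0
            then Complex.exp (2 * (π : ℂ) * Complex.I * (t₂ : ℂ)) * J2 n₁ t₁ ρ₁ m₁ p.2 q.2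
            else 0)
        - (if p = q then 1 else 0))

theorem Fin.sum_ite_val_eq {M : Type*} [AddCommMonoid M] {n c : ℕ} (hc : c < n)
    (f : Fin n → M) : (∑ q : Fin n, if (q : ℕ) = c then f q else 0) = f ⟨c, hc⟩ := by
  simp_rw [← Fin.ext_iff (b := ⟨c, hc⟩)]
  exact Fintype.sum_ite_eq' _ f

noncomputable def geomVec (n : ℕ) (θ : ℂ) : Fin n → ℂ :=
  fun s => Complex.exp ((s : ℕ) * θ)

theorem geomVec_apply (n : ℕ) (θ : ℂ) (s : Fin n) :
    geomVec n θ s = Complex.exp ((s : ℕ) * θ) := rfl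

theorem Sblk_mulVec_geomVec {n₁ a : ℕ} (ha : a ≤ n₁) {t₁ : ℝ} {θ : ℂ}
    (hθ : Complex.exp (n₁ * θ) = Complex.exp (2 * π * Complex.I * t₁)) :
    Sblk n₁ t₁ a *ᵥ geomVec n₁ θ = Complex.exp (-(a * θ)) • geomVec n₁ θ := by
  funext s
  simp only [mulVec, dotProduct, Sblk, of_apply, add_mul, ite_mul, zero_mul, one_mul,
    Finset.sum_add_distrib, Pi.smul_apply, smul_eq_mul, geomVec_apply]
  by_cases hs : (s : ℕ) < a
  · simp only [hs, true_and, show ¬ a ≤ (s : ℕ) by omega, false_and, if_false,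
      Finset.sum_const_zero, add_zero]
    rw [Fin.sum_ite_val_eq (by omega) (fun s' => _ * Complex.exp ((s' : ℕ) * θ)),
      ← Complex.exp_add, ← Complex.exp_add]
    have hperiod : Complex.exp (n₁ * θ - 2 * π * Complex.I * t₁) = 1 := by
      rw [Complex.exp_sub, hθ, div_self (Complex.exp_ne_zero _)]
    conv_rhs => rw [← one_mul (Complex.exp _), ← hperiod, ← Complex.exp_add]
    congr 1
    push_cast [Nat.cast_sub ha]
    ring
  · simp only [hs, false_and, if_false, Finset.sum_const_zero, zero_add,
      show a ≤ (s : ℕ) by omega, true_and]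
    simp_rw [show ∀ s' : Fin n₁, ((s' : ℕ) + a = s ↔ (s' : ℕ) = s - a) from fun _ => by omega]
    rw [Fin.sum_ite_val_eq (by omega) (fun s' => Complex.exp ((s' : ℕ) * θ)),
      ← Complex.exp_add, Nat.cast_sub (by omega)]
    ring_nf

theorem J2_mulVec_geomVec {n₁ m₁ : ℕ} (hm₁ : m₁ ≤ n₁) {t₁ : ℝ} (ρ₁ : ℕ) {θ : ℂ}
    (hθ : Complex.exp (n₁ * θ) = Complex.exp (2 * π * Complex.I * t₁)) :
    J2 n₁ t₁ ρ₁ m₁ *ᵥ geomVec n₁ θ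
      = (Complex.exp (2 * π * Complex.I * ρ₁ * t₁) * Complex.exp (-(m₁ * θ))) •
          geomVec n₁ θ := by
  rw [J2, smul_mulVec, Sblk_mulVec_geomVec hm₁ hθ, smul_smul]

section K2Rows

variable {n₁ n₂ : ℕ} {δy t₁ t₂ : ℝ} {ρ₁ m₁ : ℕ} (y : Fin n₂ → ℂ) (x : Fin n₁ → ℂ)
  (p₁ : Fin n₂) (p₂ : Fin n₁)

theorem K2_mulVec_apply_of_succ_lt (h : (p₁ : ℕ) + 1 < n₂) :
    (K2 n₁ n₂ δy t₁ t₂ ρ₁ m₁ *ᵥ fun p => y p.1 * x p.2) (p₁, p₂)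
      = 1 / δy * ((y ⟨p₁ + 1, h⟩ - y p₁) * x p₂) := by
  simp only [mulVec, dotProduct, K2, of_apply, mul_assoc, ← Finset.mul_sum]
  congr 1
  have hsucc (q : Fin n₂ × Fin n₁) : (q.1 : ℕ) = p₁ + 1 ∧ q.2 = p₂ ↔ q = (⟨p₁ + 1, h⟩, p₂) := by
    simp [Prod.ext_iff, Fin.ext_iff]
  simp only [sub_mul, Finset.sum_sub_distrib, ite_mul, zero_mul, one_mul, Fintype.sum_ite_eq,
    show ¬ (p₁ : ℕ) = n₂ - 1 by omega, false_and, if_false, add_zero, hsucc, Fintype.sum_ite_eq']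

theorem K2_mulVec_apply_last (h : (p₁ : ℕ) = n₂ - 1) :
    (K2 n₁ n₂ δy t₁ t₂ ρ₁ m₁ *ᵥ fun p => y p.1 * x p.2) (p₁, p₂)
      = 1 / δy * (Complex.exp (2 * π * Complex.I * t₂) * y ⟨0, p₁.pos⟩ *
          (J2 n₁ t₁ ρ₁ m₁ *ᵥ x) p₂ - y p₁ * x p₂) := by
  simp only [mulVec, dotProduct, K2, of_apply, mul_assoc, ← Finset.mul_sum]
  congr 1
  simp only [sub_mul, add_mul, Finset.sum_sub_distrib, Finset.sum_add_distrib, ite_mul,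
    zero_mul, one_mul, Fintype.sum_ite_eq, h, true_and]
  rw [Finset.sum_eq_zero fun q _ => if_neg fun hq => by have := q.1.isLt; omega, zero_add,
    Fintype.sum_prod_type]
  simp only [Finset.sum_ite_irrel, Finset.sum_const_zero, Fin.sum_ite_val_eq p₁.pos,
    Finset.mul_sum]
  exact congrArg (· - _) (Finset.sum_congr rfl fun _ _ => by ring)

end K2Rows

theorem K2_mulVec_geomVec_kron {n₁ n₂ : ℕ} {δy t₁ t₂ : ℝ} {ρ₁ m₁ : ℕ} {x : Fin n₁ → ℂ}
    {μ θ : ℂ} (hx : J2 n₁ t₁ ρ₁ m₁ *ᵥ x = μ • x)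
    (hθ : Complex.exp (2 * π * Complex.I * t₂) * μ = Complex.exp (n₂ * θ)) :
    (K2 n₁ n₂ δy t₁ t₂ ρ₁ m₁ *ᵥ fun p => geomVec n₂ θ p.1 * x p.2)
      = (1 / δy * (Complex.exp θ - 1)) • fun p => geomVec n₂ θ p.1 * x p.2 := by
  funext ⟨p₁, p₂⟩
  simp only [Pi.smul_apply, smul_eq_mul]
  by_cases hp : (p₁ : ℕ) = n₂ - 1
  · have hshift : Complex.exp θ * geomVec n₂ θ p₁ = Complex.exp (n₂ * θ) := by
      rw [geomVec_apply, ← Complex.exp_add, hp, Nat.cast_sub (by omega)]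
      ring_nf
    rw [K2_mulVec_apply_last _ _ _ _ hp, hx]
    simp only [geomVec_apply, Pi.smul_apply, smul_eq_mul, Nat.cast_zero, zero_mul,
      Complex.exp_zero] at hshift ⊢
    linear_combination (1 / δy * x p₂) * (hθ - hshift)
  · have hshift : geomVec n₂ θ ⟨p₁ + 1, by omega⟩ = Complex.exp θ * geomVec n₂ θ p₁ := by
      rw [geomVec_apply, geomVec_apply, ← Complex.exp_add]
      push_cast
      ring_nf
    rw [K2_mulVec_apply_of_succ_lt _ _ _ _ (by omega), hshift]
    ring

theorem stmt_6_general (n₁ n₂ : ℕ) (hn₁ : 1 ≤ n₁) (hn₂ : 1 ≤ n₂)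
    (δy : ℝ) (t₁ t₂ : ℝ)
    (ρ₁ : ℕ) (m₁ : ℕ) (hm₁ : m₁ ≤ n₁)
    (i j : ℕ)
    (θi : ℂ) (hθi : θi = 2 * (π : ℂ) * Complex.I * ((i : ℂ) + (t₁ : ℂ)) / (n₁ : ℂ))
    (x : Fin n₁ → ℂ) (hx : ∀ s : Fin n₁, x s = Complex.exp (((s : ℕ) : ℂ) * θi))
    (t₂hat : ℝ) (ht₂hat : t₂hat = t₂ - (m₁ : ℝ) / n₁ * t₁ + (ρ₁ : ℝ) * t₁)
    (θij : ℂ)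
    (hθij : θij = 2 * (π : ℂ) * Complex.I
      * ((((j : ℝ) - (m₁ : ℝ) / n₁ * i + t₂hat : ℝ)) : ℂ) / (n₂ : ℂ))
    (y : Fin n₂ → ℂ) (hy : ∀ s : Fin n₂, y s = Complex.exp (((s : ℕ) : ℂ) * θij)) :
    (K2 n₁ n₂ δy t₁ t₂ ρ₁ m₁).mulVec (fun p => y p.1 * x p.2)
      = ((1 / (δy : ℂ)) * (Complex.exp θij - 1)) • (fun p => y p.1 * x p.2) := by
  obtain rfl : x = geomVec n₁ θi := funext hx
  obtain rfl : y = geomVec n₂ θij := funext hy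
  have hn₁0 : (n₁ : ℂ) ≠ 0 := by exact_mod_cast (by omega : n₁ ≠ 0)
  have hn₂0 : (n₂ : ℂ) ≠ 0 := by exact_mod_cast (by omega : n₂ ≠ 0)
  have hx_period : Complex.exp (n₁ * θi) = Complex.exp (2 * π * Complex.I * t₁) :=
    Complex.exp_eq_exp_iff_exists_int.mpr ⟨i, by rw [hθi]; field_simp; push_cast; ring⟩
  refine K2_mulVec_geomVec_kron (J2_mulVec_geomVec hm₁ ρ₁ hx_period) ?_
  rw [← Complex.exp_add, ← Complex.exp_add]
  refine Complex.exp_eq_exp_iff_exists_int.mpr ⟨-j, ?_⟩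
  rw [hθij, ht₂hat, hθi]
  push_cast
  field_simp
  ring

/-- Theorem 4.2: the eigenpairs of `K₂` are
`(δy⁻¹(e^{θ_{i,j}} − 1), y_{i,j} ⊗ xᵢ)` with
`θ_{i,j} = 2πι(j − (m₁/n₁)i + t̂₂)/n₂`, `t̂₂ = t₂ − (m₁/n₁)t₁ + ρ₁t₁`. -/
theorem stmt_6 (n₁ n₂ : ℕ) (hn₁ : 1 ≤ n₁) (hn₂ : 1 ≤ n₂)
    (δy : ℝ) (hδy : 0 < δy) (t₁ t₂ : ℝ)
    (ρ₁ : ℕ) (hρ₁ : ρ₁ ≤ 1) (m₁ : ℕ) (hm₁ : m₁ ≤ n₁)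
    (i j : ℕ) (hi : 1 ≤ i) (hin : i ≤ n₁) (hj : 1 ≤ j) (hjn : j ≤ n₂)
    (θi : ℂ) (hθi : θi = 2 * (π : ℂ) * Complex.I * ((i : ℂ) + (t₁ : ℂ)) / (n₁ : ℂ))
    (x : Fin n₁ → ℂ) (hx : ∀ s : Fin n₁, x s = Complex.exp (((s : ℕ) : ℂ) * θi))
    (t₂hat : ℝ) (ht₂hat : t₂hat = t₂ - (m₁ : ℝ) / n₁ * t₁ + (ρ₁ : ℝ) * t₁)
    (θij : ℂ)
    (hθij : θij = 2 * (π : ℂ) * Complex.I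
      * ((((j : ℝ) - (m₁ : ℝ) / n₁ * i + t₂hat : ℝ)) : ℂ) / (n₂ : ℂ))
    (y : Fin n₂ → ℂ) (hy : ∀ s : Fin n₂, y s = Complex.exp (((s : ℕ) : ℂ) * θij)) :
    (K2 n₁ n₂ δy t₁ t₂ ρ₁ m₁).mulVec (fun p => y p.1 * x p.2)
      = ((1 / (δy : ℂ)) * (Complex.exp θij - 1)) • (fun p => y p.1 * x p.2) :=
  stmt_6_general n₁ n₂ hn₁ hn₂ δy t₁ t₂ ρ₁ m₁ hm₁ i j θi hθi x hx t₂hat ht₂hat θij hθij y hy
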